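/- Let T be a balanced tree, x a node of T, and z = c_T(x) the characteristic word of x in T. Then z is admissible and P(z) ≤ ht(T). -/

import Mathlib

/-!
Read bottom to top, the characteristic word of a node grows by one letter `ht R` each time the
path to the root leaves a left child `L` of a node `L ∧ R`. By induction on the path, the
potential of the word collected inside `L` is at most `ht L`; balance gives `ht L - 1 ≤ ht R`,
so the new letter keeps the word admissible, and contracting the potential with `ht R` yields at
most `max (ht L) (ht R) + 1 = ht (L ∧ R)`.
-/

/-- Complete rooted planar binary trees. -/
inductive BTree where
  | leaf : BTree
  | node : BTree → BTree → BTree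
  deriving DecidableEq

namespace BTree

/-- The height of a tree. -/
def ht : BTree → ℕ
  | leaf => 0
  | node l r => 1 + max l.ht r.ht

/-- The imbalance value of the root of a tree (`γ`). -/
def imb : BTree → ℤ
  | leaf => 0
  | node l r => (r.ht : ℤ) - l.ht

/-- A tree is balanced if every node has imbalance value in {-1, 0, 1}. -/
def Balanced : BTree → Prop
  | leaf => True
  | node l r =>
      ((r.ht : ℤ) - l.ht = -1 ∨ (r.ht : ℤ) - l.ht = 0 ∨ (r.ht : ℤ) - l.ht = 1) ∧
      Balanced l ∧ Balanced r

/-- The subtree at a position (`false` = go left, `true` = go right). -/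
def subtreeAt : BTree → List Bool → Option BTree
  | t, [] => some t
  | leaf, _ :: _ => none
  | node l _, false :: p => subtreeAt l p
  | node _ r, true :: p => subtreeAt r p

/-- `p` is the position of an internal node of `t`. -/
def IsNodePos (t : BTree) (p : List Bool) : Prop :=
  ∃ l r, subtreeAt t p = some (node l r)

/-- Right rotation whose root `y` is at position `p`: the subtree
`(A ∧ B) ∧ C` at `p` is replaced by `A ∧ (B ∧ C)`. -/
inductive RotAt : BTree → List Bool → BTree → Prop
  | here (a b c : BTree) : RotAt (node (node a b) c) [] (node a (node b c))
  | left {l l' : BTree} (r : BTree) {p : List Bool} :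
      RotAt l p l' → RotAt (node l r) (false :: p) (node l' r)
  | right (l : BTree) {r r' : BTree} {p : List Bool} :
      RotAt r p r' → RotAt (node l r) (true :: p) (node l r')

/-- `t₁` is obtained from `t₀` by a single right rotation (`t₀ ⋌ t₁`). -/
def Rot (t₀ t₁ : BTree) : Prop := ∃ p, RotAt t₀ p t₁

/-- The Tamari order: reflexive transitive closure of right rotation. -/
def Tamari : BTree → BTree → Prop := Relation.ReflTransGen Rot

/-- The characteristic word of the node at position `p` in `t`: the heights of
the right subtrees of the node and of its ancestors whose right child is not
itself on the path, ordered from bottom to top. -/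
def charWord : BTree → List Bool → List ℕ
  | node _ r, [] => [r.ht]
  | node l r, false :: p => charWord l p ++ [r.ht]
  | node _ r, true :: p => charWord r p
  | leaf, _ => []
/-- Admissible words on ℕ. -/
def Admissible : List ℕ → Prop
  | [] => True
  | [_] => True
  | a :: b :: t =>
      a - 1 ≤ b ∧ Admissible ((if a - 1 ≤ b ∧ b ≤ a + 1 then max a b + 1 else b) :: t)
termination_by l => l.length

/-- The potential of an admissible word: iterate the substitution down to one letter. -/
def potential : List ℕ → ℕ
  | [] => 0
  | [a] => a
  | a :: b :: t => potential ((if a - 1 ≤ b ∧ b ≤ a + 1 then max a b + 1 else b) :: t)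
termination_by l => l.length

/-- The letter that replaces the first two letters `a b` of a word in `Admissible` and
`potential`. -/
def merge (a b : ℕ) : ℕ := if a - 1 ≤ b ∧ b ≤ a + 1 then max a b + 1 else b

lemma admissible_cons_cons (a b : ℕ) (t : List ℕ) :
    Admissible (a :: b :: t) ↔ a - 1 ≤ b ∧ Admissible (merge a b :: t) := by
  rw [Admissible]; rfl

lemma potential_cons_cons (a b : ℕ) (t : List ℕ) :
    potential (a :: b :: t) = potential (merge a b :: t) := by
  rw [potential]; rfl

lemma merge_le_max_succ {a h : ℕ} (b : ℕ) (ha : a ≤ h) : merge a b ≤ max h b + 1 := by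
  unfold merge; split <;> omega

/-- With `potential [] = 0` and truncated subtraction, this also holds for `w = []`. -/
lemma admissible_append_singleton (w : List ℕ) (m : ℕ) :
    Admissible (w ++ [m]) ↔ Admissible w ∧ potential w - 1 ≤ m := by
  cases w with
  | nil => simp [Admissible, potential]
  | cons a t =>
    induction t generalizing a with
    | nil => simp [admissible_cons_cons, Admissible, potential]
    | cons b t ih =>
      simp only [List.cons_append] at ih ⊢
      rw [admissible_cons_cons, ih, admissible_cons_cons, potential_cons_cons, and_assoc]

lemma potential_append_singleton {w : List ℕ} (hw : w ≠ []) (m : ℕ) :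
    potential (w ++ [m]) = merge (potential w) m := by
  obtain ⟨a, t, rfl⟩ := List.exists_cons_of_ne_nil hw
  induction t generalizing a with
  | nil => simp [potential_cons_cons, potential]
  | cons b t ih =>
    simp only [List.cons_append] at ih ⊢
    rw [potential_cons_cons, ih _ (List.cons_ne_nil _ _), potential_cons_cons]

lemma potential_append_singleton_le {w : List ℕ} {h : ℕ} (hw : potential w ≤ h) (m : ℕ) :
    potential (w ++ [m]) ≤ max h m + 1 := by
  rcases eq_or_ne w [] with rfl | hne
  · simp only [List.nil_append, potential]; omega
  · rw [potential_append_singleton hne]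
    exact merge_le_max_succ m hw

lemma Balanced.ht_left_le {l r : BTree} (h : Balanced (node l r)) : l.ht ≤ r.ht + 1 := by
  have := h.1
  omega

theorem charWord_admissible_of_balanced_general (T : BTree) (p : List Bool)
    (hT : Balanced T) :
    Admissible (charWord T p) ∧ potential (charWord T p) ≤ ht T := by
  induction p generalizing T with
  | nil =>
    cases T with
    | leaf => simp [charWord, Admissible, potential]
    | node a b => simp only [charWord, Admissible, potential, ht, true_and]; omega
  | cons x p ih =>
    cases T with
    | leaf => simp [charWord, Admissible, potential]
    | node a b =>
      cases x with
      | true =>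
        obtain ⟨hadm, hpot⟩ := ih b hT.2.2
        exact ⟨hadm, hpot.trans (by simp only [ht]; omega)⟩
      | false =>
        obtain ⟨hadm, hpot⟩ := ih a hT.2.1
        have hab := hT.ht_left_le
        refine ⟨(admissible_append_singleton _ _).2 ⟨hadm, by omega⟩, ?_⟩
        simpa only [charWord, ht, add_comm 1] using potential_append_singleton_le hpot b.ht

/-- In a balanced tree `T`, the characteristic word of any node is admissible
and its potential is at most `ht T`. -/
theorem charWord_admissible_of_balanced (T : BTree) (p : List Bool)
    (hT : Balanced T) (hp : IsNodePos T p) :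
    Admissible (charWord T p) ∧ potential (charWord T p) ≤ ht T :=
  charWord_admissible_of_balanced_general T p hT

end BTree
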